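/- Let T be a non-abelian finite simple group, k ≥ 1, ℓ ≥ 2, and let H ≤ Hol(T^k) = T^k ⋊ Aut(T^k) be a permutation group on Γ = T^k (via the holomorph action) having two minimal normal subgroups M₁ ≅ N₁ ≅ T^k (the left and right regular copies). Let δ : H → H^ℓ be the diagonal embedding and set G = M₁^ℓ · (Hδ × Sym(ℓ)) ≤ H wr Sym(ℓ) acting in product action on Ω = Γ^ℓ. Then M₁^ℓ is a regular normal subgroup of G, N₁δ = {(n,...,n) : n ∈ N₁} is a semiregular intransitive minimal normal subgroup of G, and consequently G is innately transitive (has a transitive minimal normal subgroup, namely M₁^ℓ) but not quasiprimitive. -/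

import Mathlib

open scoped Pointwise

namespace QP

variable {Ω : Type*}

/-- `P` is a partition of `Ω`. -/
def IsPartition (P : Set (Set Ω)) : Prop :=
  ∅ ∉ P ∧ ∀ ω : Ω, ∃! b : Set Ω, b ∈ P ∧ ω ∈ b

/-- A proper partition: neither `{Ω}` nor the partition into singletons. -/
def IsProperPartition (P : Set (Set Ω)) : Prop :=
  IsPartition P ∧ P ≠ {Set.univ} ∧ ¬ ∀ b ∈ P, ∃ ω : Ω, b = {ω}

/-- The pointwise stabiliser of the partition `P` (kernel of the action on `P`),
as a subgroup of `Sym(Ω)`: the permutations fixing every block of `P` setwise. -/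
def partKernel (P : Set (Set Ω)) : Subgroup (Equiv.Perm Ω) where
  carrier := {g | ∀ b ∈ P, g • b = b}
  one_mem' := by intro b hb; simp
  mul_mem' := by
    intro g h hg hh b hb
    rw [mul_smul, hh b hb, hg b hb]
  inv_mem' := by
    intro g hg b hb
    rw [inv_smul_eq_iff, hg b hb]

/-- The setwise stabiliser of a partition `P` in `Sym(Ω)`. -/
def partStab (P : Set (Set Ω)) : Subgroup (Equiv.Perm Ω) :=
  MulAction.stabilizer (Equiv.Perm Ω) P

/-- The permutation of the set of blocks of `P` induced by an element of
the stabiliser of `P`. -/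
noncomputable def blockPerm (P : Set (Set Ω)) (g : ↥(partStab P)) : Equiv.Perm ↥P where
  toFun b := ⟨(g : Equiv.Perm Ω) • (b : Set Ω), by
    have h1 : (g : Equiv.Perm Ω) • (b : Set Ω) ∈ (g : Equiv.Perm Ω) • P :=
      Set.smul_mem_smul_set b.2
    rwa [g.2] at h1⟩
  invFun b := ⟨(g : Equiv.Perm Ω)⁻¹ • (b : Set Ω), by
    have h0 : (g : Equiv.Perm Ω) • P = P := g.2
    have h2 : ((g : Equiv.Perm Ω)⁻¹) • P = P := by
      rw [inv_smul_eq_iff, h0]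
    have h1 : (g : Equiv.Perm Ω)⁻¹ • (b : Set Ω) ∈ (g : Equiv.Perm Ω)⁻¹ • P :=
      Set.smul_mem_smul_set b.2
    rwa [h2] at h1⟩
  left_inv b := by
    apply Subtype.ext
    simp
  right_inv b := by
    apply Subtype.ext
    simp

/-- The homomorphism from the stabiliser of a partition `P` to the symmetric
group on the set of blocks of `P`. -/
noncomputable def componentHom (P : Set (Set Ω)) : ↥(partStab P) →* Equiv.Perm ↥P where
  toFun := blockPerm P
  map_one' := by
    apply Equiv.ext; intro b
    apply Subtype.ext
    simp [blockPerm]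
  map_mul' := by
    intro g h
    apply Equiv.ext; intro b
    apply Subtype.ext
    simp [blockPerm, mul_smul]

/-- The component `G^P` of `G` on a partition `P` : the permutation group
induced on the set of blocks of `P` by the setwise stabiliser of `P` in `G`. -/
noncomputable def component (G : Subgroup (Equiv.Perm Ω)) (P : Set (Set Ω)) :
    Subgroup (Equiv.Perm ↥P) :=
  Subgroup.map (componentHom P) (G.subgroupOf (partStab P))

section abstr
variable {X : Type*} [Group X]

/-- `N` is a normal subgroup of the (sub)group `G`. -/
def IsNormalIn (N G : Subgroup X) : Prop :=
  N ≤ G ∧ ∀ g ∈ G, ∀ n ∈ N, g * n * g⁻¹ ∈ N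

/-- `N` is a minimal normal subgroup of `G`. -/
def IsMinimalNormalIn (N G : Subgroup X) : Prop :=
  IsNormalIn N G ∧ N ≠ ⊥ ∧
    ∀ K : Subgroup X, IsNormalIn K G → K ≠ ⊥ → K ≤ N → K = N

/-- The socle of `G`: the subgroup generated by all minimal normal subgroups. -/
def socle (G : Subgroup X) : Subgroup X :=
  ⨆ N ∈ {N : Subgroup X | IsMinimalNormalIn N G}, N

/-- `M` is the internal direct product of the family `N` of subgroups. -/
def IsInternalDirectProductOver {ι : Type*} (M : Subgroup X) (N : ι → Subgroup X) : Prop :=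
  (∀ i, N i ≤ M) ∧
  (∀ i j, i ≠ j → ∀ x ∈ N i, ∀ y ∈ N j, Commute x y) ∧
  (⨆ i, N i) = M ∧
  (∀ i, N i ⊓ (⨆ j ∈ ({i}ᶜ : Set ι), N j) = ⊥)

end abstr

/-- A transitive permutation group on `α`. -/
def IsTransitivePerm {α : Type*} (H : Subgroup (Equiv.Perm α)) : Prop :=
  ∀ a b : α, ∃ g ∈ H, g a = b

/-- A regular permutation group: transitive with trivial point stabilisers. -/
def IsRegularPerm {α : Type*} (H : Subgroup (Equiv.Perm α)) : Prop :=
  IsTransitivePerm H ∧ ∀ g ∈ H, ∀ a : α, g a = a → g = 1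

/-- A semiregular permutation group: all point stabilisers are trivial. -/
def IsSemiregularPerm {α : Type*} (H : Subgroup (Equiv.Perm α)) : Prop :=
  ∀ g ∈ H, ∀ a : α, g a = a → g = 1

/-- A quasiprimitive permutation group: transitive, and every nontrivial
normal subgroup is transitive. -/
def IsQuasiprimitivePerm {α : Type*} (H : Subgroup (Equiv.Perm α)) : Prop :=
  IsTransitivePerm H ∧
    ∀ N : Subgroup (Equiv.Perm α), IsNormalIn N H → N ≠ ⊥ → IsTransitivePerm N

section indexed

variable {ι : Type*}

/-- A Cartesian decomposition, indexed form: a family of pairwise distinct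
proper partitions such that any choice of blocks, one from each partition,
intersects in exactly one point. -/
def IsCartesianDecomp (Γ : ι → Set (Set Ω)) : Prop :=
  (∀ i, IsProperPartition (Γ i)) ∧ Function.Injective Γ ∧
  ∀ c : ι → Set Ω, (∀ i, c i ∈ Γ i) → ∃! ω : Ω, ∀ i, ω ∈ c i

/-- The Cartesian decomposition `Γ` is `M`-normal, with `N i` playing the
role of `M^{Γ i}`: each partition is `M`-invariant, `M` is the internal direct
product of the `N i`, each `N i` acts faithfully on `Γ i`, and
`∏_{j ≠ i} N j` is the kernel of the `M`-action on `Γ i`. -/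
structure IsNormalDecomp (M : Subgroup (Equiv.Perm Ω)) (Γ : ι → Set (Set Ω))
    (N : ι → Subgroup (Equiv.Perm Ω)) : Prop where
  invariant : ∀ i, ∀ g ∈ M, ∀ b ∈ Γ i, g • b ∈ Γ i
  product : IsInternalDirectProductOver M N
  faithful : ∀ i, N i ⊓ partKernel (Γ i) = ⊥
  kernel : ∀ i, M ⊓ partKernel (Γ i) = ⨆ j ∈ ({i}ᶜ : Set ι), N j

end indexed

section setbased

/-- A Cartesian decomposition, as a (finite) set of proper partitions. -/
def IsCartesianDecompSet (E : Set (Set (Set Ω))) : Prop :=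
  E.Finite ∧ (∀ P ∈ E, IsProperPartition P) ∧
  ∀ c : Set (Set Ω) → Set Ω, (∀ P ∈ E, c P ∈ P) → ∃! ω : Ω, ∀ P ∈ E, ω ∈ c P

/-- `E` is a homogeneous Cartesian decomposition: all partitions have the same size. -/
def IsHomogeneous (E : Set (Set (Set Ω))) : Prop :=
  ∀ P ∈ E, ∀ Q ∈ E, Nat.card ↥P = Nat.card ↥Q

/-- `E` is invariant under `G`: `G` permutes the partitions in `E`. -/
def InvariantDec (G : Subgroup (Equiv.Perm Ω)) (E : Set (Set (Set Ω))) : Prop :=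
  ∀ g ∈ G, ∀ P ∈ E, g • P ∈ E

/-- `G` is transitive on `E`. -/
def TransitiveOnDec (G : Subgroup (Equiv.Perm Ω)) (E : Set (Set (Set Ω))) : Prop :=
  ∀ P ∈ E, ∀ Q ∈ E, ∃ g ∈ G, g • P = Q

/-- The Cartesian decomposition `E` is `M`-normal: `M` fixes each partition
in `E` setwise, and `M` is the internal direct product of subgroups `N P`
(`P ∈ E`), where `∏_{Q ≠ P} N Q` is the kernel of the `M`-action on `P`. -/
def IsNormalDecompSet (M : Subgroup (Equiv.Perm Ω)) (E : Set (Set (Set Ω))) : Prop :=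
  (∀ g ∈ M, ∀ P ∈ E, g • P = P) ∧
  ∃ N : Set (Set Ω) → Subgroup (Equiv.Perm Ω),
    (∀ P ∈ E, N P ≤ M) ∧
    (∀ P Q, P ∈ E → Q ∈ E → P ≠ Q → ∀ x ∈ N P, ∀ y ∈ N Q, Commute x y) ∧
    (⨆ P ∈ E, N P) = M ∧
    (∀ P ∈ E, N P ⊓ (⨆ Q ∈ E \ {P}, N Q) = ⊥) ∧
    (∀ P ∈ E, M ⊓ partKernel P = ⨆ Q ∈ E \ {P}, N Q)

/-- `E` is a blow-up decomposition for `G`: a `G`-invariant Cartesian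
decomposition on which `G` acts transitively, which is `M`-normal for some
transitive normal subgroup `M` of `G` such that `M^Γ = Soc(G^Γ)` for every
`Γ ∈ E`. -/
def IsBlowUpDecomp (G : Subgroup (Equiv.Perm Ω)) (E : Set (Set (Set Ω))) : Prop :=
  IsCartesianDecompSet E ∧ InvariantDec G E ∧ TransitiveOnDec G E ∧
  ∃ M : Subgroup (Equiv.Perm Ω), IsNormalIn M G ∧ IsTransitivePerm M ∧
    IsNormalDecompSet M E ∧ ∀ P ∈ E, component M P = socle (component G P)

end setbased

end QP
namespace QP

section Wreath

variable (K : Type*) [Group K] (ℓ : ℕ)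

/-- The coordinate-permuting action of `Sym(ℓ)` on `K^ℓ`, as automorphisms. -/
def permCoord : Equiv.Perm (Fin ℓ) →* MulAut (Fin ℓ → K) where
  toFun σ :=
    { toFun := fun f => f ∘ σ.symm
      invFun := fun f => f ∘ σ
      left_inv := fun f => by funext i; simp
      right_inv := fun f => by funext i; simp
      map_mul' := fun f g => rfl }
  map_one' := by
    apply MulEquiv.ext; intro f; rfl
  map_mul' := by
    intro σ τ
    apply MulEquiv.ext; intro f; rfl

/-- The wreath product `K wr Sym(ℓ) = K^ℓ ⋊ Sym(ℓ)`. -/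
abbrev WreathProduct := (Fin ℓ → K) ⋊[permCoord K ℓ] Equiv.Perm (Fin ℓ)

variable (Γ : Type*) [MulAction K Γ]

/-- The product action of the wreath product `K wr Sym(ℓ)` on `Γ^ℓ`,
where `K` acts on `Γ`. -/
def prodAction : WreathProduct K ℓ →* Equiv.Perm (Fin ℓ → Γ) where
  toFun w :=
    { toFun := fun v i => w.left i • v (w.right.symm i)
      invFun := fun v i => (w.left (w.right i))⁻¹ • v (w.right i)
      left_inv := fun v => by funext i; simp
      right_inv := fun v => by funext i; simp }
  map_one' := by
    apply Equiv.ext; intro v; funext i; simp <;> rfl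
  map_mul' := by
    intro w₁ w₂
    apply Equiv.ext; intro v; funext i
    simp only [SemidirectProduct.mul_left, SemidirectProduct.mul_right, Pi.mul_apply,
      mul_smul, permCoord, MonoidHom.coe_mk, OneHom.coe_mk, MulEquiv.coe_mk,
      Equiv.coe_fn_mk, Function.comp_apply, Equiv.coe_fn_symm_mk, Equiv.Perm.mul_def,
      Equiv.symm_trans_apply, Equiv.trans_apply]

end Wreath

section Reg

variable (Λ : Type*) [Group Λ]

/-- The right regular representation of a group. -/
def rightReg : Λ →* Equiv.Perm Λ :=
  MonoidHom.mk' (fun g => Equiv.mulRight g⁻¹) (by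
    intro a b; ext x; simp [mul_assoc])

/-- The left regular representation of a group. -/
def leftReg : Λ →* Equiv.Perm Λ :=
  MonoidHom.mk' (fun g => Equiv.mulLeft g) (by
    intro a b; ext x; simp [mul_assoc])

/-- The diagonal embedding of `K` into `K^ℓ`. -/
def constHom (K : Type*) [Group K] (ℓ : ℕ) : K →* (Fin ℓ → K) :=
  MonoidHom.mk' (fun h => fun _ => h) (fun _ _ => rfl)

end Reg

section Sub

variable {Γ : Type*} (H : Subgroup (Equiv.Perm Γ)) (ℓ : ℕ)

/-- The product action of `H wr Sym(ℓ)` on `Γ^ℓ`, for `H ≤ Sym(Γ)`. -/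
def wrAction : WreathProduct ↥H ℓ →* Equiv.Perm (Fin ℓ → Γ) :=
  prodAction ↥H ℓ Γ

/-- The subgroup `A^ℓ` of the base group of `H wr Sym(ℓ)`, for `A ≤ H`. -/
def baseSub (A : Subgroup (Equiv.Perm Γ)) : Subgroup (WreathProduct ↥H ℓ) :=
  Subgroup.map SemidirectProduct.inl (Subgroup.pi Set.univ fun _ => A.subgroupOf H)

/-- The diagonal copy `Hδ` of `H` in the base group of `H wr Sym(ℓ)`. -/
def diagSub : Subgroup (WreathProduct ↥H ℓ) :=
  (SemidirectProduct.inl.comp (constHom ↥H ℓ)).range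

/-- The top group `Sym(ℓ)` of `H wr Sym(ℓ)`. -/
def topSub : Subgroup (WreathProduct ↥H ℓ) :=
  SemidirectProduct.inr.range

end Sub

end QP

namespace QP

section Ex19

variable {Γ : Type*} (H : Subgroup (Equiv.Perm Γ)) (ℓ : ℕ)

/-- The group `G = M₁^ℓ · (Hδ × Sym(ℓ))` of the example, as a permutation
group on `Γ^ℓ` via the product action. -/
noncomputable def exampleG (A : Subgroup (Equiv.Perm Γ)) :
    Subgroup (Equiv.Perm (Fin ℓ → Γ)) :=
  Subgroup.map (wrAction H ℓ) (baseSub H ℓ A ⊔ diagSub H ℓ ⊔ topSub H ℓ)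

/-- The image `A^ℓ` in `Sym(Γ^ℓ)` of the base power of `A ≤ H`. -/
noncomputable def basePower (A : Subgroup (Equiv.Perm Γ)) :
    Subgroup (Equiv.Perm (Fin ℓ → Γ)) :=
  Subgroup.map (wrAction H ℓ) (baseSub H ℓ A)

/-- The diagonal copy `Aδ = {(a,...,a) : a ∈ A}` in `Sym(Γ^ℓ)`, for `A ≤ H`. -/
noncomputable def diagCopy (A : Subgroup (Equiv.Perm Γ)) :
    Subgroup (Equiv.Perm (Fin ℓ → Γ)) :=
  Subgroup.map ((wrAction H ℓ).comp (SemidirectProduct.inl.comp (constHom ↥H ℓ)))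
    (A.subgroupOf H)

end Ex19

end QP

/-!
The whole example lives in `Sym(Γ)^ℓ` together with the coordinate permutations. Right and left
translations commute, so `M₁^ℓ` centralises the diagonal copy `N₁δ`, and both are normal in `G`.
`N₁δ` is minimal normal because `δ` is injective and `N₁` is minimal normal in `H`; it preserves
the diagonal of `Γ^ℓ`, so it is intransitive and `G` is not quasiprimitive. For `M₁^ℓ`: a
nontrivial `G`-normal `K ≤ M₁^ℓ` contains an element with a nontrivial coordinate; since `M₁ ≅ T^k`
has trivial centre, commutators with `M₁` in that coordinate give a nontrivial `H`-normal subgroup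
of `M₁` inside `K`, which is all of `M₁`, and `Sym(ℓ)` carries it to every coordinate.
-/

namespace QP

section Normality

variable {X : Type*} [Group X]

lemma isNormalIn_of_le_normalizer {N G : Subgroup X} (hNG : N ≤ G)
    (hG : G ≤ Subgroup.normalizer (N : Set X)) : IsNormalIn N G :=
  ⟨hNG, fun _ hg n hn => (Subgroup.mem_normalizer_iff.mp (hG hg) n).mp hn⟩

lemma le_normalizer_of_conj_mem {S N : Subgroup X}
    (h : ∀ s ∈ S, ∀ n ∈ N, s * n * s⁻¹ ∈ N) : S ≤ Subgroup.normalizer (N : Set X) := by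
  intro s hs
  rw [Subgroup.mem_normalizer_iff]
  refine fun n => ⟨h s hs n, fun hn => ?_⟩
  simpa [mul_assoc] using h s⁻¹ (S.inv_mem hs) _ hn

lemma IsMinimalNormalIn.map_of_injective {Y : Type*} [Group Y] {B H : Subgroup X}
    {G : Subgroup Y} {φ : X →* Y} (hφ : Function.Injective φ) (hB : IsMinimalNormalIn B H)
    (hBG : IsNormalIn (B.map φ) G) (hHG : H.map φ ≤ G) : IsMinimalNormalIn (B.map φ) G := by
  refine ⟨hBG, (Subgroup.map_eq_bot_iff_of_injective B hφ).not.mpr hB.2.1, ?_⟩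
  intro K hK hK1 hKB
  have hKrange : K ≤ φ.range := hKB.trans (Subgroup.map_le_range φ B)
  have hRB : K.comap φ ≤ B := by
    simpa [Subgroup.comap_map_eq_self_of_injective hφ] using Subgroup.comap_mono (f := φ) hKB
  have hRnormal : IsNormalIn (K.comap φ) H := by
    refine ⟨hRB.trans hB.1.1, fun h hh r hr => ?_⟩
    simpa using hK.2 (φ h) (hHG ⟨h, hh, rfl⟩) (φ r) hr
  have hR1 : K.comap φ ≠ ⊥ := by
    intro hR
    apply hK1
    rw [← Subgroup.map_comap_eq_self hKrange, hR, Subgroup.map_bot]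
  rw [← Subgroup.map_comap_eq_self hKrange, hB.2.2 _ hRnormal hR1 hRB]

end Normality

section MinimalPower

variable {ι X : Type*} [Group X] [DecidableEq ι] {A H : Subgroup X} {L : Subgroup (ι → X)}

lemma isNormalIn_inf_comap_mulSingle (hA : IsNormalIn A H)
    (hdiag : ∀ h ∈ H, ∀ l ∈ L, (fun _ => h) * l * (fun _ => h)⁻¹ ∈ L) (i : ι) :
    IsNormalIn (A ⊓ L.comap (MonoidHom.mulSingle (fun _ => X) i)) H := by
  refine ⟨inf_le_left.trans hA.1, fun h hh a ha => ⟨hA.2 h hh a ha.1, ?_⟩⟩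
  have hconj : (fun _ => h) * Pi.mulSingle i a * (fun _ => h)⁻¹ = Pi.mulSingle i (h * a * h⁻¹) := by
    ext j
    rcases eq_or_ne j i with rfl | hj <;> simp [*]
  simpa [hconj] using hdiag h hh _ ha.2

/-- The commutator of `l` with `Pi.mulSingle i a`, for some `a ∈ A` not commuting with `l i`,
is a nontrivial element of `L` supported on the coordinate `i`. -/
lemma inf_comap_mulSingle_ne_bot (hAcent : A ⊓ Subgroup.centralizer (A : Set X) = ⊥)
    (hbase : ∀ f ∈ Subgroup.pi Set.univ (fun _ => A), ∀ l ∈ L, f * l * f⁻¹ ∈ L)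
    {l : ι → X} (hl : l ∈ L) {i : ι} (hlA : l i ∈ A) (hli : l i ≠ 1) :
    A ⊓ L.comap (MonoidHom.mulSingle (fun _ => X) i) ≠ ⊥ := by
  obtain ⟨a, haA, ha⟩ : ∃ a ∈ A, a * l i ≠ l i * a := by
    by_contra! h
    have hcent : l i ∈ A ⊓ Subgroup.centralizer (A : Set X) :=
      ⟨hlA, Subgroup.mem_centralizer_iff.mpr h⟩
    rw [hAcent, Subgroup.mem_bot] at hcent
    exact hli hcent
  have hcomm : Pi.mulSingle i (a * l i * a⁻¹ * (l i)⁻¹)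
      = Pi.mulSingle i a * l * (Pi.mulSingle i a)⁻¹ * l⁻¹ := by
    ext j
    rcases eq_or_ne j i with rfl | hj <;> simp [*]
  intro hbot
  have hc : a * l i * a⁻¹ * (l i)⁻¹ ∈ A ⊓ L.comap (MonoidHom.mulSingle (fun _ => X) i) := by
    refine Subgroup.mem_inf.mpr
      ⟨mul_mem (mul_mem (mul_mem haA hlA) (inv_mem haA)) (inv_mem hlA), ?_⟩
    rw [Subgroup.mem_comap, MonoidHom.mulSingle_apply, hcomm]
    exact mul_mem (hbase _ ((Subgroup.mulSingle_mem_pi i a).mpr fun _ => haA) l hl) (inv_mem hl)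
  rw [hbot, Subgroup.mem_bot, mul_inv_eq_one, mul_inv_eq_iff_eq_mul] at hc
  exact ha hc

lemma exists_map_mulSingle_le (hA : IsMinimalNormalIn A H)
    (hAcent : A ⊓ Subgroup.centralizer (A : Set X) = ⊥) (hLA : L ≤ Subgroup.pi Set.univ fun _ => A)
    (hL : L ≠ ⊥) (hbase : ∀ f ∈ Subgroup.pi Set.univ (fun _ => A), ∀ l ∈ L, f * l * f⁻¹ ∈ L)
    (hdiag : ∀ h ∈ H, ∀ l ∈ L, (fun _ => h) * l * (fun _ => h)⁻¹ ∈ L) :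
    ∃ i, A.map (MonoidHom.mulSingle (fun _ => X) i) ≤ L := by
  obtain ⟨l, hl, hl1⟩ := L.bot_or_exists_ne_one.resolve_left hL
  obtain ⟨i, hi⟩ := Function.ne_iff.mp hl1
  have hQ := hA.2.2 _ (isNormalIn_inf_comap_mulSingle hA.1 hdiag i)
    (inf_comap_mulSingle_ne_bot hAcent hbase hl (hLA hl i trivial) hi) inf_le_left
  exact ⟨i, Subgroup.map_le_iff_le_comap.mpr (hQ.ge.trans inf_le_right)⟩

lemma pi_le_of_map_mulSingle_le [Finite ι] (hperm : ∀ σ : Equiv.Perm ι, ∀ l ∈ L, l ∘ σ ∈ L)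
    {i : ι} (hi : A.map (MonoidHom.mulSingle (fun _ => X) i) ≤ L) :
    Subgroup.pi Set.univ (fun _ => A) ≤ L := by
  refine Subgroup.pi_le_iff.mpr fun j => ?_
  rintro _ ⟨a, ha, rfl⟩
  simpa [Pi.mulSingle_comp_equiv] using hperm (Equiv.swap i j) _ (hi ⟨a, ha, rfl⟩)

end MinimalPower

section RegularRepresentations

variable {Λ : Type*} [Group Λ]

@[simp]
lemma rightReg_apply (g x : Λ) : rightReg Λ g x = x * g⁻¹ := rfl

@[simp]
lemma leftReg_apply (g x : Λ) : leftReg Λ g x = g * x := rfl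

lemma rightReg_injective : Function.Injective (rightReg Λ) := fun a b h => by
  simpa only [rightReg_apply, one_mul, inv_inj] using congrArg (fun e : Equiv.Perm Λ => e 1) h

lemma isRegularPerm_range_rightReg : IsRegularPerm (rightReg Λ).range := by
  refine ⟨fun a b => ⟨rightReg Λ (b⁻¹ * a), ⟨_, rfl⟩, by rw [rightReg_apply]; group⟩, ?_⟩
  rintro _ ⟨g, rfl⟩ a ha
  rw [show g = 1 by simpa using ha, map_one]

lemma isSemiregularPerm_range_leftReg : IsSemiregularPerm (leftReg Λ).range := by
  rintro _ ⟨g, rfl⟩ a ha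
  rw [show g = 1 by simpa using ha, map_one]

lemma commute_of_mem_range_rightReg_of_mem_range_leftReg :
    ∀ a ∈ (rightReg Λ).range, ∀ b ∈ (leftReg Λ).range, Commute a b := by
  rintro _ ⟨a, rfl⟩ _ ⟨b, rfl⟩
  ext x
  simp [mul_assoc]

lemma range_rightReg_inf_centralizer (hΛ : Subgroup.center Λ = ⊥) :
    (rightReg Λ).range ⊓ Subgroup.centralizer ((rightReg Λ).range : Set (Equiv.Perm Λ)) = ⊥ := by
  rw [eq_bot_iff]
  rintro _ ⟨⟨g, rfl⟩, hg⟩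
  have hgc : g ∈ Subgroup.center Λ := Subgroup.mem_center_iff.mpr fun h =>
    rightReg_injective (by simpa using Subgroup.mem_centralizer_iff.mp hg _ ⟨h, rfl⟩)
  rw [hΛ, Subgroup.mem_bot] at hgc
  rw [hgc, map_one]
  exact Subgroup.one_mem _

end RegularRepresentations

lemma center_eq_bot_of_isSimpleGroup {T : Type*} [Group T] [IsSimpleGroup T]
    (hT : ¬ ∀ a b : T, a * b = b * a) : Subgroup.center T = ⊥ :=
  (IsSimpleGroup.eq_bot_or_eq_top_of_normal _ inferInstance).resolve_right fun h =>
    hT fun a b => (Subgroup.mem_center_iff.mp (h ▸ Subgroup.mem_top a) b).symm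

lemma center_pi_eq_bot {ι T : Type*} [Group T] (hT : Subgroup.center T = ⊥) :
    Subgroup.center (ι → T) = ⊥ := by
  rw [Subgroup.center_pi, Subgroup.pi_eq_bot_iff]
  exact fun _ => hT

section Coordinatewise

variable {ι Γ : Type*}

def piPerm (ι Γ : Type*) : (ι → Equiv.Perm Γ) →* Equiv.Perm (ι → Γ) :=
  MulAction.toPermHom (ι → Equiv.Perm Γ) (ι → Γ)

@[simp]
lemma piPerm_apply (f : ι → Equiv.Perm Γ) (v : ι → Γ) (i : ι) : piPerm ι Γ f v i = f i (v i) :=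
  rfl

lemma piPerm_injective : Function.Injective (piPerm ι Γ) := by
  intro f g h
  ext i x
  simpa using congrFun (congrArg (fun e : Equiv.Perm (ι → Γ) => e (fun _ => x)) h) i

def diagPerm (Γ : Type*) (ℓ : ℕ) : Equiv.Perm Γ →* Equiv.Perm (Fin ℓ → Γ) :=
  (piPerm (Fin ℓ) Γ).comp (constHom (Equiv.Perm Γ) ℓ)

lemma IsRegularPerm.map_piPerm {A : Subgroup (Equiv.Perm Γ)} (hA : IsRegularPerm A) :
    IsRegularPerm ((Subgroup.pi Set.univ fun _ : ι => A).map (piPerm ι Γ)) := by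
  refine ⟨fun a b => ?_, ?_⟩
  · choose g hg hgab using fun i => hA.1 (a i) (b i)
    exact ⟨piPerm ι Γ g, ⟨g, fun i _ => hg i, rfl⟩, funext hgab⟩
  · rintro _ ⟨f, hf, rfl⟩ a ha
    rw [show f = 1 from funext fun i => hA.2 (f i) (hf i trivial) (a i) (congrFun ha i), map_one]

lemma diagPerm_injective (ℓ : ℕ) [NeZero ℓ] : Function.Injective (diagPerm Γ ℓ) :=
  piPerm_injective.comp fun _ _ h => congrFun h 0

lemma IsSemiregularPerm.map_diagPerm {ℓ : ℕ} [NeZero ℓ] {B : Subgroup (Equiv.Perm Γ)}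
    (hB : IsSemiregularPerm B) : IsSemiregularPerm (B.map (diagPerm Γ ℓ)) := by
  rintro _ ⟨b, hb, rfl⟩ a ha
  rw [hB b hb (a 0) (congrFun ha 0), map_one]

/-- The diagonal `{(x, …, x)}` is invariant under the diagonal subgroup. -/
lemma not_isTransitivePerm_map_diagPerm [Nontrivial Γ] {ℓ : ℕ} (hℓ : 2 ≤ ℓ)
    (B : Subgroup (Equiv.Perm Γ)) : ¬ IsTransitivePerm (B.map (diagPerm Γ ℓ)) := by
  intro hB
  obtain ⟨x, y, hxy⟩ := exists_pair_ne Γ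
  let i₀ : Fin ℓ := ⟨0, by omega⟩
  obtain ⟨_, ⟨b, -, rfl⟩, hb⟩ := hB (fun _ => x) (Function.update (fun _ => x) i₀ y)
  have h₀ : b x = y := by simpa [diagPerm, constHom] using congrFun hb i₀
  have h₁ : b x = x := by simpa [diagPerm, constHom, i₀, Fin.ext_iff] using congrFun hb ⟨1, hℓ⟩
  exact hxy (h₁.symm.trans h₀)

end Coordinatewise

section Wreath

variable {Γ : Type*} (H : Subgroup (Equiv.Perm Γ)) (ℓ : ℕ)

lemma wrAction_inl (p : Fin ℓ → H) :
    wrAction H ℓ (SemidirectProduct.inl p) = piPerm (Fin ℓ) Γ fun i => p i := by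
  ext v i
  rfl

lemma wrAction_inr_conj_piPerm (σ : Equiv.Perm (Fin ℓ)) (f : Fin ℓ → Equiv.Perm Γ) :
    wrAction H ℓ (SemidirectProduct.inr σ) * piPerm (Fin ℓ) Γ f *
      (wrAction H ℓ (SemidirectProduct.inr σ))⁻¹ = piPerm (Fin ℓ) Γ (f ∘ σ.symm) := by
  rw [← map_inv, ← map_inv]
  ext v i
  simp [wrAction, prodAction, Equiv.Perm.inv_def]

lemma basePower_eq {A : Subgroup (Equiv.Perm Γ)} (hA : A ≤ H) :
    basePower H ℓ A = (Subgroup.pi Set.univ fun _ => A).map (piPerm (Fin ℓ) Γ) := by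
  ext g
  constructor
  · rintro ⟨_, ⟨p, hp, rfl⟩, rfl⟩
    exact ⟨fun i => p i, fun i _ => Subgroup.mem_subgroupOf.mp (hp i trivial),
      (wrAction_inl H ℓ p).symm⟩
  · rintro ⟨f, hf, rfl⟩
    refine ⟨SemidirectProduct.inl fun i => ⟨f i, hA (hf i trivial)⟩,
      ⟨_, fun i _ => Subgroup.mem_subgroupOf.mpr (hf i trivial), rfl⟩, ?_⟩
    rw [wrAction_inl]

lemma diagCopy_eq {B : Subgroup (Equiv.Perm Γ)} (hB : B ≤ H) :
    diagCopy H ℓ B = B.map (diagPerm Γ ℓ) := by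
  ext g
  constructor
  · rintro ⟨h, hh, rfl⟩
    exact ⟨h, Subgroup.mem_subgroupOf.mp hh, (wrAction_inl H ℓ _).symm⟩
  · rintro ⟨b, hb, rfl⟩
    exact ⟨⟨b, hB hb⟩, Subgroup.mem_subgroupOf.mpr hb, wrAction_inl H ℓ _⟩

lemma exampleG_eq (A : Subgroup (Equiv.Perm Γ)) :
    exampleG H ℓ A = basePower H ℓ A ⊔ diagCopy H ℓ H ⊔ (topSub H ℓ).map (wrAction H ℓ) := by
  rw [exampleG, Subgroup.map_sup, Subgroup.map_sup, diagCopy, Subgroup.subgroupOf_self,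
    ← MonoidHom.range_eq_map, diagSub, MonoidHom.map_range]
  rfl

lemma basePower_le_exampleG (A : Subgroup (Equiv.Perm Γ)) : basePower H ℓ A ≤ exampleG H ℓ A := by
  rw [exampleG_eq]
  exact le_sup_left.trans le_sup_left

lemma diagCopy_self_le_exampleG (A : Subgroup (Equiv.Perm Γ)) :
    diagCopy H ℓ H ≤ exampleG H ℓ A := by
  rw [exampleG_eq]
  exact le_sup_right.trans le_sup_left

lemma wrAction_inr_mem_exampleG (A : Subgroup (Equiv.Perm Γ)) (σ : Equiv.Perm (Fin ℓ)) :
    wrAction H ℓ (SemidirectProduct.inr σ) ∈ exampleG H ℓ A := by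
  rw [exampleG_eq]
  exact Subgroup.mem_sup_right ⟨_, ⟨σ, rfl⟩, rfl⟩

end Wreath

section ExampleNormal

variable {Γ : Type*} (H : Subgroup (Equiv.Perm Γ)) (ℓ : ℕ) {A : Subgroup (Equiv.Perm Γ)}

lemma exampleG_le_normalizer (hA : A ≤ H) {N : Subgroup (Equiv.Perm (Fin ℓ → Γ))}
    (hbase : ∀ f ∈ Subgroup.pi Set.univ (fun _ => A), ∀ n ∈ N,
      piPerm (Fin ℓ) Γ f * n * (piPerm (Fin ℓ) Γ f)⁻¹ ∈ N)
    (hdiag : ∀ h ∈ H, ∀ n ∈ N, diagPerm Γ ℓ h * n * (diagPerm Γ ℓ h)⁻¹ ∈ N)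
    (htop : ∀ σ : Equiv.Perm (Fin ℓ), ∀ n ∈ N, wrAction H ℓ (SemidirectProduct.inr σ) * n *
      (wrAction H ℓ (SemidirectProduct.inr σ))⁻¹ ∈ N) :
    exampleG H ℓ A ≤ Subgroup.normalizer (N : Set (Equiv.Perm (Fin ℓ → Γ))) := by
  rw [exampleG_eq, basePower_eq H ℓ hA, diagCopy_eq H ℓ le_rfl]
  refine sup_le (sup_le ?_ ?_) ?_ <;> refine le_normalizer_of_conj_mem ?_
  · rintro _ ⟨f, hf, rfl⟩
    exact hbase f hf
  · rintro _ ⟨h, hh, rfl⟩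
    exact hdiag h hh
  · rintro _ ⟨_, ⟨σ, rfl⟩, rfl⟩
    exact htop σ

lemma basePower_isNormalIn (hA : IsNormalIn A H) :
    IsNormalIn (basePower H ℓ A) (exampleG H ℓ A) := by
  refine isNormalIn_of_le_normalizer ?_ (exampleG_le_normalizer H ℓ hA.1 ?_ ?_ ?_)
  · exact basePower_le_exampleG H ℓ A
  all_goals rw [basePower_eq H ℓ hA.1]
  · rintro f hf _ ⟨g, hg, rfl⟩
    rw [← map_inv, ← map_mul, ← map_mul]
    exact ⟨_, mul_mem (mul_mem hf hg) (inv_mem hf), rfl⟩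
  · rintro h hh _ ⟨g, hg, rfl⟩
    rw [diagPerm, MonoidHom.comp_apply, ← map_inv, ← map_mul, ← map_mul]
    exact ⟨_, fun i _ => hA.2 h hh _ (hg i trivial), rfl⟩
  · rintro σ _ ⟨g, hg, rfl⟩
    rw [wrAction_inr_conj_piPerm]
    exact ⟨_, fun i _ => hg _ trivial, rfl⟩

lemma diagCopy_isNormalIn {B : Subgroup (Equiv.Perm Γ)} (hA : A ≤ H) (hB : IsNormalIn B H)
    (hAB : ∀ a ∈ A, ∀ b ∈ B, Commute a b) :
    IsNormalIn (diagCopy H ℓ B) (exampleG H ℓ A) := by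
  refine isNormalIn_of_le_normalizer ?_ (exampleG_le_normalizer H ℓ hA ?_ ?_ ?_)
  · refine le_trans ?_ (diagCopy_self_le_exampleG H ℓ A)
    rw [diagCopy_eq H ℓ hB.1, diagCopy_eq H ℓ le_rfl]
    exact Subgroup.map_mono hB.1
  all_goals rw [diagCopy_eq H ℓ hB.1]
  · rintro f hf _ ⟨b, hb, rfl⟩
    rw [diagPerm, MonoidHom.comp_apply, ← map_inv, ← map_mul, ← map_mul]
    refine ⟨b, hb, congrArg (piPerm (Fin ℓ) Γ) (funext fun i => ?_)⟩
    simp [constHom, (hAB _ (hf i trivial) b hb).eq]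
  · rintro h hh _ ⟨b, hb, rfl⟩
    rw [← map_inv, ← map_mul, ← map_mul]
    exact ⟨_, hB.2 h hh b hb, rfl⟩
  · rintro σ _ ⟨b, hb, rfl⟩
    rw [diagPerm, MonoidHom.comp_apply, wrAction_inr_conj_piPerm]
    exact ⟨b, hb, rfl⟩

end ExampleNormal

section ExampleMinimal

variable {Γ : Type*} (H : Subgroup (Equiv.Perm Γ)) (ℓ : ℕ) [NeZero ℓ] {A : Subgroup (Equiv.Perm Γ)}

lemma basePower_isMinimalNormalIn (hA : IsMinimalNormalIn A H)
    (hAcent : A ⊓ Subgroup.centralizer (A : Set (Equiv.Perm Γ)) = ⊥) :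
    IsMinimalNormalIn (basePower H ℓ A) (exampleG H ℓ A) := by
  have hN := basePower_isNormalIn H ℓ hA.1
  rw [basePower_eq H ℓ hA.1.1] at hN ⊢
  refine ⟨hN, fun h => hA.2.1 ?_, fun K hK hK1 hKle => ?_⟩
  · rw [Subgroup.map_eq_bot_iff_of_injective _ piPerm_injective, Subgroup.pi_eq_bot_iff] at h
    exact h 0
  set L := K.comap (piPerm (Fin ℓ) Γ)
  have hKL : L.map (piPerm (Fin ℓ) Γ) = K :=
    Subgroup.map_comap_eq_self (hKle.trans (Subgroup.map_le_range _ _))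
  have hLA : L ≤ Subgroup.pi Set.univ fun _ => A := by
    simpa [L, Subgroup.comap_map_eq_self_of_injective piPerm_injective] using
      Subgroup.comap_mono (f := piPerm (Fin ℓ) Γ) hKle
  have hconj : ∀ x, piPerm (Fin ℓ) Γ x ∈ exampleG H ℓ A → ∀ l ∈ L, x * l * x⁻¹ ∈ L :=
    fun x hx l hl => by simpa [L] using hK.2 _ hx _ hl
  have hperm : ∀ σ : Equiv.Perm (Fin ℓ), ∀ l ∈ L, l ∘ σ ∈ L := fun σ l hl => by
    simpa [L, wrAction_inr_conj_piPerm] using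
      hK.2 _ (wrAction_inr_mem_exampleG H ℓ A σ.symm) _ hl
  obtain ⟨i, hi⟩ := exists_map_mulSingle_le hA hAcent hLA
    (fun hL => hK1 (by rw [← hKL, hL, Subgroup.map_bot]))
    (fun f hf => hconj f (hN.1 ⟨f, hf, rfl⟩))
    (fun h hh => hconj _ (diagCopy_self_le_exampleG H ℓ A
      ((diagCopy_eq H ℓ le_rfl).ge ⟨h, hh, rfl⟩)))
  exact le_antisymm hKle (hKL ▸ Subgroup.map_mono (pi_le_of_map_mulSingle_le hperm hi))

lemma diagCopy_isMinimalNormalIn {B : Subgroup (Equiv.Perm Γ)} (hA : A ≤ H)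
    (hB : IsMinimalNormalIn B H) (hAB : ∀ a ∈ A, ∀ b ∈ B, Commute a b) :
    IsMinimalNormalIn (diagCopy H ℓ B) (exampleG H ℓ A) := by
  have hN := diagCopy_isNormalIn H ℓ hA hB.1 hAB
  rw [diagCopy_eq H ℓ hB.1.1] at hN ⊢
  refine hB.map_of_injective (diagPerm_injective ℓ) hN ?_
  rw [← diagCopy_eq H ℓ le_rfl]
  exact diagCopy_self_le_exampleG H ℓ A

end ExampleMinimal

end QP

theorem holomorph_diagonal_quotient_example_general
    {T : Type*} [Group T] [IsSimpleGroup T]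
    (hTnonab : ¬ ∀ a b : T, a * b = b * a)
    (k : ℕ) (hk : 1 ≤ k) (ℓ : ℕ) (hℓ : 2 ≤ ℓ)
    (H M₁ N₁ : Subgroup (Equiv.Perm (Fin k → T)))
    (hM₁ : M₁ = (QP.rightReg (Fin k → T)).range)
    (hN₁ : N₁ = (QP.leftReg (Fin k → T)).range)
    (hM₁H : M₁ ≤ H) (hN₁H : N₁ ≤ H)
    (hM₁min : QP.IsMinimalNormalIn M₁ H)
    (hN₁min : QP.IsMinimalNormalIn N₁ H) :
    QP.IsNormalIn (QP.basePower H ℓ M₁) (QP.exampleG H ℓ M₁) ∧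
    QP.IsRegularPerm (QP.basePower H ℓ M₁) ∧
    QP.IsMinimalNormalIn (QP.basePower H ℓ M₁) (QP.exampleG H ℓ M₁) ∧
    QP.diagCopy H ℓ N₁ ≤ QP.exampleG H ℓ M₁ ∧
    QP.IsSemiregularPerm (QP.diagCopy H ℓ N₁) ∧
    ¬ QP.IsTransitivePerm (QP.diagCopy H ℓ N₁) ∧
    QP.IsMinimalNormalIn (QP.diagCopy H ℓ N₁) (QP.exampleG H ℓ M₁) ∧
    ¬ QP.IsQuasiprimitivePerm (QP.exampleG H ℓ M₁) := by
  open QP in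
  have : NeZero ℓ := ⟨by omega⟩
  have : Nonempty (Fin k) := ⟨⟨0, hk⟩⟩
  have hcent : M₁ ⊓ Subgroup.centralizer (M₁ : Set (Equiv.Perm (Fin k → T))) = ⊥ := by
    rw [hM₁]
    exact range_rightReg_inf_centralizer (center_pi_eq_bot (center_eq_bot_of_isSimpleGroup hTnonab))
  have hcomm : ∀ a ∈ M₁, ∀ b ∈ N₁, Commute a b := by
    rw [hM₁, hN₁]
    exact commute_of_mem_range_rightReg_of_mem_range_leftReg
  have hBmin := basePower_isMinimalNormalIn H ℓ hM₁min hcent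
  have hDmin := diagCopy_isMinimalNormalIn H ℓ hM₁H hN₁min hcomm
  have hDintrans : ¬ IsTransitivePerm (diagCopy H ℓ N₁) := by
    rw [diagCopy_eq H ℓ hN₁H]
    exact not_isTransitivePerm_map_diagPerm hℓ N₁
  refine ⟨hBmin.1, ?_, hBmin, hDmin.1.1, ?_, hDintrans, hDmin,
    fun hqp => hDintrans (hqp.2 _ hDmin.1 hDmin.2.1)⟩
  · rw [basePower_eq H ℓ hM₁H, hM₁]
    exact isRegularPerm_range_rightReg.map_piPerm
  · rw [diagCopy_eq H ℓ hN₁H, hN₁]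
    exact isSemiregularPerm_range_leftReg.map_diagPerm

/-- Let T be a non-abelian finite simple group, k ≥ 1, ℓ ≥ 2, and let
H ≤ Hol(T^k) ≤ Sym(T^k) have the two regular minimal normal subgroups M₁ (right
translations) and N₁ (left translations), both ≅ T^k.  Let
G = M₁^ℓ·(Hδ × Sym(ℓ)) ≤ H wr Sym(ℓ) in product action on Ω = (T^k)^ℓ.  Then M₁^ℓ is
a regular (minimal) normal subgroup of G, N₁δ is a semiregular intransitive minimal
normal subgroup of G, so G is innately transitive but not quasiprimitive. -/
theorem holomorph_diagonal_quotient_example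
    {T : Type*} [Group T] [Finite T] [IsSimpleGroup T]
    (hTnonab : ¬ ∀ a b : T, a * b = b * a)
    (k : ℕ) (hk : 1 ≤ k) (ℓ : ℕ) (hℓ : 2 ≤ ℓ)
    (H M₁ N₁ : Subgroup (Equiv.Perm (Fin k → T)))
    (hM₁ : M₁ = (QP.rightReg (Fin k → T)).range)
    (hN₁ : N₁ = (QP.leftReg (Fin k → T)).range)
    (hM₁H : M₁ ≤ H) (hN₁H : N₁ ≤ H)
    (hM₁min : QP.IsMinimalNormalIn M₁ H)
    (hN₁min : QP.IsMinimalNormalIn N₁ H)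
    (hM₁N₁ : M₁ ≠ N₁)
    (honly : ∀ K : Subgroup (Equiv.Perm (Fin k → T)),
      QP.IsMinimalNormalIn K H → K = M₁ ∨ K = N₁) :
    QP.IsNormalIn (QP.basePower H ℓ M₁) (QP.exampleG H ℓ M₁) ∧
    QP.IsRegularPerm (QP.basePower H ℓ M₁) ∧
    QP.IsMinimalNormalIn (QP.basePower H ℓ M₁) (QP.exampleG H ℓ M₁) ∧
    QP.diagCopy H ℓ N₁ ≤ QP.exampleG H ℓ M₁ ∧
    QP.IsSemiregularPerm (QP.diagCopy H ℓ N₁) ∧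
    ¬ QP.IsTransitivePerm (QP.diagCopy H ℓ N₁) ∧
    QP.IsMinimalNormalIn (QP.diagCopy H ℓ N₁) (QP.exampleG H ℓ M₁) ∧
    ¬ QP.IsQuasiprimitivePerm (QP.exampleG H ℓ M₁) :=
  holomorph_diagonal_quotient_example_general hTnonab k hk ℓ hℓ H M₁ N₁ hM₁ hN₁ hM₁H hN₁H hM₁min
    hN₁min
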